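/- arXiv:1812.11221 — 4 statements merged into one kernel-verified Lean document; each statement's English description precedes it below -/
import Mathlib

section
/- The set S = {t ∈ (0,1) : t is irrational and e_{i+1}(t) ≥ φ^{d_i(t)} for infinitely many i} is uncountable. -/
open Filter Topology

/-- Numerators `c_n` of the convergents of the regular continued fraction
`[0; e 1, e 2, ...]` (the value `e 0` is unused). -/
def cfNum (e : ℕ → ℕ) : ℕ → ℕ
  | 0 => 0
  | 1 => 1
  | n + 2 => e (n + 2) * cfNum e (n + 1) + cfNum e n

/-- Denominators `d_n` of the convergents of the regular continued fraction
`[0; e 1, e 2, ...]`. -/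
def cfDen (e : ℕ → ℕ) : ℕ → ℕ
  | 0 => 1
  | 1 => e 1
  | n + 2 => e (n + 2) * cfDen e (n + 1) + cfDen e n

/-- `t` has regular continued fraction expansion `[0; e 1, e 2, ...]`, i.e. the partial
quotients `e i` (for `i ≥ 1`) are positive integers and the convergents tend to `t`. -/
def IsCFExpansion (t : ℝ) (e : ℕ → ℕ) : Prop :=
  (∀ i, 1 ≤ i → 1 ≤ e i) ∧
    Tendsto (fun n => (cfNum e n : ℝ) / (cfDen e n : ℝ)) atTop (𝓝 t)

/-- The set `S = {t ∈ (0,1) : t irrational, e_{i+1}(t) ≥ φ^{d_i(t)} infinitely often}`,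
where `φ = (√5 + 1)/2`. -/
def rrDivergenceSet : Set ℝ :=
  {t | t ∈ Set.Ioo (0 : ℝ) 1 ∧ Irrational t ∧
    ∃ e : ℕ → ℕ, IsCFExpansion t e ∧
      ∀ N : ℕ, ∃ i ≥ N, ((Real.sqrt 5 + 1) / 2) ^ cfDen e i ≤ (e (i + 1) : ℝ)}

/-!
Choose the partial quotients by feedback, `e (n + 1) = 2 ^ d n + b n` for a bit `b n`, so that
`e (n + 1) ≥ 2 ^ d n ≥ φ ^ d n` for every `n`. Any sequence of positive partial quotients
converges (an alternating series with terms `(d n * d (n + 1))⁻¹`) to some `t ∈ (0, 1)`, and the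
error estimate `(d n * (d (n + 1) + d n))⁻¹ ≤ |t - c n / d n| < (d n * d (n + 1))⁻¹` makes `t`
irrational and determines its partial quotients. Hence distinct bit sequences give distinct
points of `S`.
-/

open Finset

theorem cfNum_congr {e e' : ℕ → ℕ} :
    ∀ {n}, (∀ k < n, e (k + 1) = e' (k + 1)) → cfNum e n = cfNum e' n
  | 0, _ => rfl
  | 1, _ => rfl
  | n + 2, h => by
    rw [cfNum, cfNum, h (n + 1) (by omega), cfNum_congr (n := n + 1) fun k hk => h k (by omega),
      cfNum_congr (n := n) fun k hk => h k (by omega)]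

theorem cfDen_congr {e e' : ℕ → ℕ} :
    ∀ {n}, (∀ k < n, e (k + 1) = e' (k + 1)) → cfDen e n = cfDen e' n
  | 0, _ => rfl
  | 1, h => h 0 one_pos
  | n + 2, h => by
    rw [cfDen, cfDen, h (n + 1) (by omega), cfDen_congr (n := n + 1) fun k hk => h k (by omega),
      cfDen_congr (n := n) fun k hk => h k (by omega)]

theorem cfNum_succ_mul_cfDen_sub {R : Type*} [CommRing R] (e : ℕ → ℕ) :
    ∀ n, (cfNum e (n + 1) : R) * cfDen e n - cfNum e n * cfDen e (n + 1) = (-1) ^ n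
  | 0 => by simp [cfNum, cfDen]
  | n + 1 => by
    have ih := cfNum_succ_mul_cfDen_sub (R := R) e n
    simp only [cfNum, cfDen]
    push_cast
    linear_combination (-1 : R) * ih

theorem cfDen_succ_add_le {e e' : ℕ → ℕ} {n : ℕ} (hpre : ∀ k < n, e (k + 1) = e' (k + 1))
    (hlt : e (n + 1) < e' (n + 1)) : cfDen e (n + 1) + cfDen e n ≤ cfDen e' (n + 1) := by
  cases n with
  | zero => exact hlt
  | succ m =>
    rw [cfDen, cfDen, ← cfDen_congr hpre, ← cfDen_congr (n := m) fun k hk => hpre k (by omega)]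
    nlinarith

section Denominators

variable {e : ℕ → ℕ}

theorem cfDen_pos (he : ∀ i, 1 ≤ i → 1 ≤ e i) : ∀ n, 0 < cfDen e n
  | 0 => one_pos
  | 1 => he 1 le_rfl
  | n + 2 => by have := cfDen_pos he n; simp only [cfDen]; positivity

theorem cfDen_add_le (he : ∀ i, 1 ≤ i → 1 ≤ e i) (n : ℕ) :
    cfDen e (n + 1) + cfDen e n ≤ cfDen e (n + 2) := by
  have := he (n + 2) (by omega)
  rw [cfDen]
  nlinarith

theorem cfDen_le_succ (he : ∀ i, 1 ≤ i → 1 ≤ e i) : ∀ n, cfDen e n ≤ cfDen e (n + 1)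
  | 0 => he 1 le_rfl
  | n + 1 => (Nat.le_add_right _ _).trans (cfDen_add_le he n)

theorem le_cfDen (he : ∀ i, 1 ≤ i → 1 ≤ e i) : ∀ n, n ≤ cfDen e n
  | 0 => Nat.zero_le _
  | 1 => he 1 le_rfl
  | n + 2 => by
    have := le_cfDen he (n + 1)
    have := cfDen_pos he n
    have := cfDen_add_le he n
    omega

end Denominators

noncomputable def cfConv (e : ℕ → ℕ) (n : ℕ) : ℝ := cfNum e n / cfDen e n

noncomputable def cfGap (e : ℕ → ℕ) (n : ℕ) : ℝ :=
  ((cfDen e n : ℝ) * cfDen e (n + 1))⁻¹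

section Convergents

variable {e : ℕ → ℕ}

theorem cfConv_succ_sub (he : ∀ i, 1 ≤ i → 1 ≤ e i) (n : ℕ) :
    cfConv e (n + 1) - cfConv e n = (-1) ^ n * cfGap e n := by
  have h0 : (cfDen e n : ℝ) ≠ 0 := by exact_mod_cast (cfDen_pos he n).ne'
  have h1 : (cfDen e (n + 1) : ℝ) ≠ 0 := by exact_mod_cast (cfDen_pos he (n + 1)).ne'
  rw [cfConv, cfConv, cfGap, ← cfNum_succ_mul_cfDen_sub e n]
  field_simp

theorem cfConv_eq_sum (he : ∀ i, 1 ≤ i → 1 ≤ e i) :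
    ∀ n, cfConv e n = ∑ i ∈ range n, (-1) ^ i * cfGap e i
  | 0 => by simp [cfConv, cfNum]
  | n + 1 => by rw [sum_range_succ, ← cfConv_eq_sum he n, ← cfConv_succ_sub he n]; ring

theorem cfGap_antitone (he : ∀ i, 1 ≤ i → 1 ≤ e i) : Antitone (cfGap e) := by
  refine antitone_nat_of_succ_le fun n => inv_anti₀ ?_ ?_
  · have := cfDen_pos he n
    have := cfDen_pos he (n + 1)
    positivity
  · exact_mod_cast Nat.mul_le_mul (cfDen_le_succ he n) (cfDen_le_succ he (n + 1))

theorem tendsto_cfGap (he : ∀ i, 1 ≤ i → 1 ≤ e i) : Tendsto (cfGap e) atTop (𝓝 0) := by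
  refine tendsto_inv_atTop_zero.comp (tendsto_atTop_mono (fun n => ?_) tendsto_natCast_atTop_atTop)
  exact_mod_cast (le_cfDen he n).trans (Nat.le_mul_of_pos_right _ (cfDen_pos he (n + 1)))

theorem exists_isCFExpansion (he : ∀ i, 1 ≤ i → 1 ≤ e i) : ∃ t, IsCFExpansion t e := by
  obtain ⟨t, ht⟩ :=
    (cfGap_antitone he).tendsto_alternating_series_of_tendsto_zero (tendsto_cfGap he)
  refine ⟨t, he, ?_⟩
  change Tendsto (cfConv e) _ _
  rwa [funext (cfConv_eq_sum he)]

end Convergents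

namespace IsCFExpansion

variable {t : ℝ} {e : ℕ → ℕ}

theorem neg_one_pow_mul_sub_cfConv_nonneg (h : IsCFExpansion t e) (n : ℕ) :
    0 ≤ (-1) ^ n * (t - cfConv e n) := by
  have hl : Tendsto (fun n => ∑ i ∈ range n, (-1) ^ i * cfGap e i) atTop (𝓝 t) := by
    rw [← funext (cfConv_eq_sum h.1)]
    exact h.2
  obtain ⟨k, rfl | rfl⟩ := Nat.even_or_odd' n
  · have := (cfGap_antitone h.1).alternating_series_le_tendsto hl k
    rw [← cfConv_eq_sum h.1] at this
    simp only [pow_mul, neg_one_sq, one_pow, one_mul]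
    linarith
  · have := (cfGap_antitone h.1).tendsto_le_alternating_series hl k
    rw [← cfConv_eq_sum h.1] at this
    rw [pow_succ, pow_mul, neg_one_sq, one_pow, one_mul]
    linarith

theorem abs_sub_cfConv (h : IsCFExpansion t e) (n : ℕ) :
    |t - cfConv e n| = (-1) ^ n * (t - cfConv e n) := by
  rw [← abs_of_nonneg (h.neg_one_pow_mul_sub_cfConv_nonneg n), abs_mul, abs_neg_one_pow, one_mul]

theorem abs_sub_cfConv_add_abs_sub_cfConv_succ (h : IsCFExpansion t e) (n : ℕ) :
    |t - cfConv e n| + |t - cfConv e (n + 1)| = cfGap e n := by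
  have hs : ((-1 : ℝ) ^ n) ^ 2 = 1 := by rw [← pow_mul, mul_comm, pow_mul, neg_one_sq, one_pow]
  rw [h.abs_sub_cfConv, h.abs_sub_cfConv, pow_succ]
  linear_combination (-1 : ℝ) ^ n * cfConv_succ_sub h.1 n + cfGap e n * hs

theorem inv_mul_add_le_abs_sub_cfConv (h : IsCFExpansion t e) (n : ℕ) :
    ((cfDen e n : ℝ) * (cfDen e (n + 1) + cfDen e n))⁻¹ ≤ |t - cfConv e n| := by
  have ha : (0 : ℝ) < cfDen e n := by exact_mod_cast cfDen_pos h.1 n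
  have hb : (0 : ℝ) < cfDen e (n + 1) := by exact_mod_cast cfDen_pos h.1 (n + 1)
  have hc : (cfDen e (n + 1) : ℝ) + cfDen e n ≤ cfDen e (n + 2) := by
    exact_mod_cast cfDen_add_le h.1 n
  have hgap :
      cfGap e (n + 1) ≤ ((cfDen e (n + 1) : ℝ) * (cfDen e (n + 1) + cfDen e n))⁻¹ := by
    unfold cfGap; gcongr
  have hsplit : ((cfDen e n : ℝ) * (cfDen e (n + 1) + cfDen e n))⁻¹
      = cfGap e n - ((cfDen e (n + 1) : ℝ) * (cfDen e (n + 1) + cfDen e n))⁻¹ := by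
    unfold cfGap; field_simp; ring
  -- `|t - cfConv e n| = cfGap e n - |t - cfConv e (n + 1)| ≥ cfGap e n - cfGap e (n + 1)`
  have := h.abs_sub_cfConv_add_abs_sub_cfConv_succ n
  have := h.abs_sub_cfConv_add_abs_sub_cfConv_succ (n + 1)
  have := abs_nonneg (t - cfConv e (n + 2))
  linarith

theorem abs_sub_cfConv_lt_cfGap (h : IsCFExpansion t e) (n : ℕ) :
    |t - cfConv e n| < cfGap e n := by
  have := cfDen_pos h.1 (n + 1)
  have := cfDen_pos h.1 (n + 2)
  have : 0 < ((cfDen e (n + 1) : ℝ) * (cfDen e (n + 2) + cfDen e (n + 1)))⁻¹ := by positivity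
  have := h.inv_mul_add_le_abs_sub_cfConv (n + 1)
  have := h.abs_sub_cfConv_add_abs_sub_cfConv_succ n
  linarith

theorem ne_cfConv (h : IsCFExpansion t e) (n : ℕ) : t ≠ cfConv e n := by
  have := cfDen_pos h.1 n
  have := cfDen_pos h.1 (n + 1)
  have := h.inv_mul_add_le_abs_sub_cfConv n
  exact sub_ne_zero.1 (abs_pos.1 (lt_of_lt_of_le (by positivity) this))

theorem strictAnti_abs_sub_cfConv (h : IsCFExpansion t e) :
    StrictAnti fun n => |t - cfConv e n| := by
  refine strictAnti_nat_of_succ_lt fun n => ?_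
  have := cfDen_pos h.1 n
  have := cfDen_pos h.1 (n + 1)
  calc |t - cfConv e (n + 1)| < cfGap e (n + 1) := h.abs_sub_cfConv_lt_cfGap (n + 1)
    _ ≤ ((cfDen e n : ℝ) * (cfDen e (n + 1) + cfDen e n))⁻¹ := by
      unfold cfGap
      gcongr
      · exact_mod_cast cfDen_le_succ h.1 n
      · exact_mod_cast cfDen_add_le h.1 n
    _ ≤ |t - cfConv e n| := h.inv_mul_add_le_abs_sub_cfConv n

theorem mem_Ioo (h : IsCFExpansion t e) : t ∈ Set.Ioo 0 1 := by
  have h0 := h.neg_one_pow_mul_sub_cfConv_nonneg 0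
  have h1 := h.neg_one_pow_mul_sub_cfConv_nonneg 1
  have hx0 : cfConv e 0 = 0 := by simp [cfConv, cfNum]
  have hx1 : cfConv e 1 ≤ 1 := by
    simp only [cfConv, cfNum, cfDen, Nat.cast_one]
    exact div_le_one_of_le₀ (by exact_mod_cast h.1 1 le_rfl) (Nat.cast_nonneg _)
  rw [hx0, pow_zero, one_mul, sub_zero] at h0
  rw [pow_one, neg_one_mul, neg_nonneg, sub_nonpos] at h1
  exact ⟨lt_of_le_of_ne h0 (hx0 ▸ h.ne_cfConv 0).symm,
    (lt_of_le_of_ne h1 (h.ne_cfConv 1)).trans_le hx1⟩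

theorem irrational (h : IsCFExpansion t e) : Irrational t := by
  rw [← Real.infinite_rat_abs_sub_lt_one_div_den_sq_iff_irrational]
  set q : ℕ → ℚ := fun n => (cfNum e n : ℚ) / cfDen e n
  have hq (n : ℕ) : (q n : ℝ) = cfConv e n := by simp [q, cfConv]
  have hinj : q.Injective := fun m n hmn =>
    h.strictAnti_abs_sub_cfConv.injective (by simp only [← hq, hmn])
  refine (Set.infinite_range_of_injective hinj).mono ?_
  rintro _ ⟨n, rfl⟩
  have hd := cfDen_pos h.1 n
  have hden : (q n).den ≤ cfDen e n := by
    have := Rat.den_dvd (cfNum e n) (cfDen e n)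
    rw [Rat.divInt_eq_div] at this
    push_cast at this
    exact_mod_cast Int.le_of_dvd (by exact_mod_cast hd) this
  calc |t - q n| < cfGap e n := hq n ▸ h.abs_sub_cfConv_lt_cfGap n
    _ ≤ 1 / ((q n).den : ℝ) ^ 2 := by
      rw [cfGap, one_div, sq]
      gcongr
      exact_mod_cast hden.trans (cfDen_le_succ h.1 n)

theorem ne_of_succ_lt {t' : ℝ} {e' : ℕ → ℕ} (h : IsCFExpansion t e) (h' : IsCFExpansion t' e')
    {n : ℕ} (hpre : ∀ k < n, e (k + 1) = e' (k + 1)) (hlt : e (n + 1) < e' (n + 1)) :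
    t ≠ t' := by
  rintro rfl
  have hx : cfConv e' n = cfConv e n := by rw [cfConv, cfConv, cfNum_congr hpre, cfDen_congr hpre]
  have := cfDen_pos h.1 n
  have hlow := h.inv_mul_add_le_abs_sub_cfConv n
  have hup := h'.abs_sub_cfConv_lt_cfGap n
  rw [hx, cfGap, ← cfDen_congr hpre] at hup
  have : ((cfDen e n : ℝ) * cfDen e' (n + 1))⁻¹
      ≤ ((cfDen e n : ℝ) * (cfDen e (n + 1) + cfDen e n))⁻¹ := by
    gcongr
    exact_mod_cast cfDen_succ_add_le hpre hlt
  linarith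

theorem unique {e' : ℕ → ℕ} (h : IsCFExpansion t e) (h' : IsCFExpansion t e') (n : ℕ) :
    e (n + 1) = e' (n + 1) := by
  induction n using Nat.strong_induction_on with
  | _ n ih =>
    rcases lt_trichotomy (e (n + 1)) (e' (n + 1)) with hlt | heq | hgt
    · exact absurd rfl (h.ne_of_succ_lt h' ih hlt)
    · exact heq
    · exact absurd rfl (h'.ne_of_succ_lt h (fun k hk => (ih k hk).symm) hgt)

end IsCFExpansion

/-- `(d n, d (n + 1))` for the partial quotients chosen by the rule `e (n + 1) = F n (d n)`. -/
def denPairOfRule (F : ℕ → ℕ → ℕ) : ℕ → ℕ × ℕ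
  | 0 => (1, F 0 1)
  | n + 1 =>
    ((denPairOfRule F n).2,
      F (n + 1) (denPairOfRule F n).2 * (denPairOfRule F n).2 + (denPairOfRule F n).1)

def quotOfRule (F : ℕ → ℕ → ℕ) : ℕ → ℕ
  | 0 => 0
  | n + 1 => F n (denPairOfRule F n).1

theorem cfDen_quotOfRule (F : ℕ → ℕ → ℕ) :
    ∀ n, cfDen (quotOfRule F) n = (denPairOfRule F n).1 ∧
      cfDen (quotOfRule F) (n + 1) = (denPairOfRule F n).2
  | 0 => ⟨rfl, rfl⟩
  | n + 1 => by
    obtain ⟨h0, h1⟩ := cfDen_quotOfRule F n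
    refine ⟨h1, ?_⟩
    rw [cfDen, h0, h1]
    rfl

theorem quotOfRule_succ (F : ℕ → ℕ → ℕ) (n : ℕ) :
    quotOfRule F (n + 1) = F n (cfDen (quotOfRule F) n) := by
  rw [(cfDen_quotOfRule F n).1]
  rfl

def quotOfBits (σ : ℕ → Bool) : ℕ → ℕ := quotOfRule fun n d => 2 ^ d + (σ n).toNat

theorem quotOfBits_succ (σ : ℕ → Bool) (n : ℕ) :
    quotOfBits σ (n + 1) = 2 ^ cfDen (quotOfBits σ) n + (σ n).toNat :=
  quotOfRule_succ _ n

theorem one_le_quotOfBits (σ : ℕ → Bool) : ∀ i, 1 ≤ i → 1 ≤ quotOfBits σ i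
  | n + 1, _ => by
    rw [quotOfBits_succ]
    exact Nat.one_le_two_pow.trans (Nat.le_add_right _ _)

theorem goldenRatio_pow_cfDen_le_quotOfBits (σ : ℕ → Bool) (i : ℕ) :
    ((√5 + 1) / 2) ^ cfDen (quotOfBits σ) i ≤ (quotOfBits σ (i + 1) : ℝ) := by
  rw [add_comm, ← Real.goldenRatio, quotOfBits_succ]
  push_cast
  calc Real.goldenRatio ^ cfDen (quotOfBits σ) i ≤ 2 ^ cfDen (quotOfBits σ) i := by
        gcongr
        exact Real.goldenRatio_lt_two.le
    _ ≤ _ := le_add_of_nonneg_right (Nat.cast_nonneg _)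

theorem eq_of_quotOfBits_succ_eq {σ σ' : ℕ → Bool}
    (h : ∀ n, quotOfBits σ (n + 1) = quotOfBits σ' (n + 1)) : σ = σ' := by
  funext n
  have := h n
  rw [quotOfBits_succ, quotOfBits_succ, cfDen_congr fun k _ => h k, Nat.add_left_cancel_iff] at this
  cases hσ : σ n <;> cases hσ' : σ' n <;> simp_all

theorem stmt1 : ¬ rrDivergenceSet.Countable := by
  intro hS
  choose t ht using fun σ : ℕ → Bool => exists_isCFExpansion (one_le_quotOfBits σ)
  have hmaps : Set.MapsTo t Set.univ rrDivergenceSet := fun σ _ =>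
    ⟨(ht σ).mem_Ioo, (ht σ).irrational, quotOfBits σ, ht σ,
      fun N => ⟨N, le_rfl, goldenRatio_pow_cfDen_le_quotOfBits σ N⟩⟩
  have hinj : Function.Injective t := fun σ σ' hσ =>
    eq_of_quotOfBits_succ_eq ((ht σ).unique (hσ ▸ ht σ'))
  have : Uncountable (ℕ → Bool) :=
    Cardinal.aleph0_lt_mk_iff.1 (by simpa using Cardinal.cantor Cardinal.aleph0)
  exact Set.not_countable_univ (hmaps.countable_of_injOn hinj.injOn hS)
end

section
/- Let m be an odd positive integer and let x be a primitive m-th root of unity in ℂ. Then |χ_{2m−1}(x)| = 1, where χ_n(q) = ∏_{i=1}^n a_i(q) and a_{2k-1}(q) = q^{2k-1}, a_{2k}(q) = q^k + q^{2k} are the partial numerators of the Ramanujan–Selberg continued fraction S₁. -/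
/-- Partial numerators of the Ramanujan–Selberg continued fraction `S₁`:
`a_{2k-1}(q) = q^{2k-1}` and `a_{2k}(q) = q^k + q^{2k}`. -/
noncomputable def s1a (q : ℂ) (n : ℕ) : ℂ :=
  if n % 2 = 1 then q ^ n else q ^ (n / 2) + q ^ n

/-! Pairing `a_{2k}(q) = q^k (1 + q^k)` with `a_{2k+1}(q) = q^{2k+1}` gives
`∏_{i < 2m} a_i(q) = q^N ∏_{k < m} (1 + q^k)`, and the index `i = 0` contributes the factor
`a_0(q) = 2`. On the unit circle only the norm of `∏_{k < m} (1 + x^k)` survives, and for a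
primitive `m`-th root of unity `x` with `m` odd this product is `2`: evaluate
`X^m - 1 = ∏_{k < m} (X - x^k)` at `X = -1`. -/

open Finset Polynomial

lemma s1a_zero (q : ℂ) : s1a q 0 = 2 := by
  norm_num [s1a]

lemma s1a_two_mul (q : ℂ) (k : ℕ) : s1a q (2 * k) = q ^ k * (1 + q ^ k) := by
  simp only [s1a, Nat.mul_mod_right, zero_ne_one, if_false, Nat.mul_div_cancel_left k two_pos]
  ring

lemma s1a_two_mul_add_one (q : ℂ) (k : ℕ) : s1a q (2 * k + 1) = q ^ (2 * k + 1) := by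
  simp [s1a, Nat.add_mod]

lemma prod_s1a_range_two_mul (q : ℂ) (n : ℕ) :
    ∏ i ∈ range (2 * n), s1a q i =
      q ^ (n ^ 2) * ∏ k ∈ range n, q ^ k * (1 + q ^ k) := by
  induction n with
  | zero => simp
  | succ n ih =>
    rw [Nat.mul_succ, prod_range_succ, prod_range_succ, ih, prod_range_succ,
      s1a_two_mul, s1a_two_mul_add_one]
    ring

lemma norm_prod_s1a_range_two_mul {q : ℂ} (hq : ‖q‖ = 1) (n : ℕ) :
    ‖∏ i ∈ range (2 * n), s1a q i‖ = ‖∏ k ∈ range n, (1 + q ^ k)‖ := by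
  simp [prod_s1a_range_two_mul, prod_mul_distrib, hq]

theorem IsPrimitiveRoot.prod_one_add_pow {R : Type*} [CommRing R] [IsDomain R] {ζ : R} {m : ℕ}
    (hζ : IsPrimitiveRoot ζ m) (hm : Odd m) : ∏ k ∈ range m, (1 + ζ ^ k) = 2 := by
  have h := congrArg (eval (-1)) (X_pow_sub_C_eq_prod hζ hm.pos (one_pow m))
  simp only [eval_sub, eval_pow, eval_X, eval_C, eval_prod, mul_one, hm.neg_one_pow] at h
  have hneg : ∏ k ∈ range m, (-1 - ζ ^ k) = -∏ k ∈ range m, (1 + ζ ^ k) := by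
    calc ∏ k ∈ range m, (-1 - ζ ^ k) = ∏ k ∈ range m, (-1) * (1 + ζ ^ k) :=
          prod_congr rfl fun _ _ => by ring
      _ = -∏ k ∈ range m, (1 + ζ ^ k) := by
          rw [prod_mul_distrib, prod_const, card_range, hm.neg_one_pow, neg_one_mul]
  rw [hneg] at h
  linear_combination h

theorem stmt15_general (m : ℕ) (hodd : Odd m) (x : ℂ)
    (hx : IsPrimitiveRoot x m) :
    ‖∏ i ∈ Finset.Icc 1 (2 * m - 1), s1a x i‖ = 1 := by
  have hm := hodd.pos
  have hsplit : ∏ i ∈ range (2 * m), s1a x i = 2 * ∏ i ∈ Icc 1 (2 * m - 1), s1a x i := by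
    rw [← prod_range_mul_prod_Ico _ (by omega : 1 ≤ 2 * m), prod_range_one, s1a_zero,
      Icc_sub_one_right_eq_Ico_of_not_isMin (by simpa [isMin_iff_eq_bot] using hm.ne')]
  have hnorm := norm_prod_s1a_range_two_mul (hx.norm'_eq_one hm.ne') m
  rw [hsplit, hx.prod_one_add_pow hodd, norm_mul, Complex.norm_two] at hnorm
  linarith

theorem stmt15 (m : ℕ) (hpos : 0 < m) (hodd : Odd m) (x : ℂ)
    (hx : IsPrimitiveRoot x m) :
    ‖∏ i ∈ Finset.Icc 1 (2 * m - 1), s1a x i‖ = 1 :=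
  stmt15_general m hodd x hx
end

section
/- Let m be an odd positive integer and let x be a primitive m-th root of unity in ℂ. Then |χ_{2m−1}(x)| = 2, where χ_n(q) = ∏_{i=1}^n a_i(q) and a_{2k-1}(q) = q^{2k-1} + q^{4k-2}, a_{2k}(q) = q^{4k} are the partial numerators of the Ramanujan–Selberg continued fraction S₂. -/
/-!
On the unit circle the even-indexed numerators `q^(2n)` and the factors `q^n` of the odd-indexed
ones `q^n (1 + q^n)` have norm one, so the norm of the product is `‖∏_{k<m} (1 + x^(2k+1))‖`.
Since `m` is odd, `x²` is again a primitive `m`-th root of unity and the numbers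
`x^(2k+1) = (x²)^k x`, `k < m`, run through all `m`-th roots of unity `η`; thus the product is
`∏_η (1 + η) = 1^m + 1^m = 2`.
-/

/-- Partial numerators of the Ramanujan–Selberg continued fraction `S₂`:
`a_{2k-1}(q) = q^{2k-1} + q^{4k-2}` and `a_{2k}(q) = q^{4k}`. -/
noncomputable def s2a (q : ℂ) (n : ℕ) : ℂ :=
  if n % 2 = 1 then q ^ n + q ^ (2 * n) else q ^ (2 * n)

open Finset Polynomial

theorem Finset.prod_range_two_mul_ite_odd {M : Type*} [CommMonoid M] (f : ℕ → M) (n : ℕ) :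
    ∏ i ∈ range (2 * n), (if i % 2 = 1 then f i else 1) = ∏ k ∈ range n, f (2 * k + 1) := by
  induction n with
  | zero => simp
  | succ n ih =>
    rw [Nat.mul_succ, prod_range_succ, prod_range_succ, ih, prod_range_succ,
      if_neg (by omega), if_pos (by omega), mul_one]

namespace IsPrimitiveRoot

variable {R : Type*} [CommRing R] [IsDomain R] {ζ α : R} {n : ℕ}

theorem nthRootsFinset_eq_image [DecidableEq R] (hζ : IsPrimitiveRoot ζ n) (hα : α ^ n = 1) :
    nthRootsFinset n (1 : R) = (range n).image (ζ ^ · * α) := by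
  rcases n.eq_zero_or_pos with rfl | hn
  · simp
  ext η
  rw [Polynomial.mem_nthRootsFinset hn, ← mem_nthRoots hn, hζ.nthRoots_eq hα]
  simp

theorem prod_range_add_pow_mul (hn : Odd n) (hζ : IsPrimitiveRoot ζ n) (hα : α ^ n = 1)
    (c : R) : ∏ k ∈ range n, (c + ζ ^ k * α) = c ^ n + 1 := by
  have hα0 : α ≠ 0 := by rintro rfl; simp [hn.pos.ne'] at hα
  classical
  rw [← one_pow n, hζ.pow_add_pow_eq_prod_add_mul c 1 hn, hζ.nthRootsFinset_eq_image hα,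
    prod_image (hζ.injOn_pow_mul hα0)]
  simp

end IsPrimitiveRoot

theorem norm_s2a {q : ℂ} (hq : ‖q‖ = 1) (n : ℕ) :
    ‖s2a q n‖ = if n % 2 = 1 then ‖1 + q ^ n‖ else 1 := by
  unfold s2a
  split_ifs
  · rw [two_mul, pow_add, ← mul_one_add, norm_mul, norm_pow, hq, one_pow, one_mul]
  · rw [norm_pow, hq, one_pow]

theorem stmt16_general (m : ℕ) (hodd : Odd m) (x : ℂ)
    (hx : IsPrimitiveRoot x m) :
    ‖∏ i ∈ Finset.Icc 1 (2 * m - 1), s2a x i‖ = 2 := by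
  have hm : 0 < m := hodd.pos
  have hx1 : ‖x‖ = 1 := hx.norm'_eq_one hm.ne'
  have hx2 : IsPrimitiveRoot (x ^ 2) m := hx.pow_of_coprime 2 (Nat.coprime_two_left.mpr hodd)
  have hIcc : Icc 1 (2 * m - 1) = Ico 1 (2 * m) := by
    rw [← Ico_add_one_right_eq_Icc, Nat.sub_add_cancel (by omega)]
  calc ‖∏ i ∈ Icc 1 (2 * m - 1), s2a x i‖
      = ∏ i ∈ range (2 * m), (if i % 2 = 1 then ‖1 + x ^ i‖ else 1) := by
        rw [norm_prod, hIcc, prod_range_eq_mul_Ico _ (by omega)]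
        simp [norm_s2a hx1]
    _ = ‖∏ k ∈ range m, (1 + (x ^ 2) ^ k * x)‖ := by
        rw [prod_range_two_mul_ite_odd, norm_prod]
        simp only [pow_succ, pow_mul]
    _ = 2 := by
        rw [hx2.prod_range_add_pow_mul hodd hx.pow_eq_one]
        norm_num

theorem stmt16 (m : ℕ) (hpos : 0 < m) (hodd : Odd m) (x : ℂ)
    (hx : IsPrimitiveRoot x m) :
    ‖∏ i ∈ Finset.Icc 1 (2 * m - 1), s2a x i‖ = 2 :=
  stmt16_general m hodd x hx
end

section
/- Let m be an odd positive integer and let x be a primitive m-th root of unity in ℂ. Then |χ_{m−1}(x)| = 1, where χ_n(q) = ∏_{i=1}^n a_i(q) and a_n(q) = q^n + q^{2n} are the partial numerators of the Ramanujan–Selberg continued fraction S₃. -/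
/-- Partial numerators of the Ramanujan–Selberg continued fraction `S₃`:
`aₙ(q) = q^n + q^{2n}`. -/
noncomputable def s3a (q : ℂ) (n : ℕ) : ℂ := q ^ n + q ^ (2 * n)

/-!
Since `aᵢ(x) = xⁱ (1 + xⁱ)` and `|x| = 1`, only `∏_{0<i<m} (1 + xⁱ)` matters. Evaluating
`X^m - 1 = ∏_{i<m} (X - xⁱ)` at `X = -1` with `m` odd gives `∏_{i<m} (1 + xⁱ) = 2`, and the
factor `i = 0` is already `2`.
-/

open Finset Polynomial

namespace IsPrimitiveRoot

variable {R : Type*} [CommRing R] [IsDomain R] {ζ : R} {n : ℕ}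

theorem prod_range_one_add_pow (hodd : Odd n) (hζ : IsPrimitiveRoot ζ n) :
    ∏ i ∈ range n, (1 + ζ ^ i) = 2 := by
  have h := congrArg (eval (-1)) (X_pow_sub_C_eq_prod hζ hodd.pos (one_pow n))
  simp only [eval_sub, eval_pow, eval_X, eval_C, eval_prod, mul_one, ← neg_add', prod_neg,
    card_range, hodd.neg_one_pow] at h
  linear_combination h

theorem prod_Icc_one_add_pow [NeZero (2 : R)] (hodd : Odd n) (hζ : IsPrimitiveRoot ζ n) :
    ∏ i ∈ Icc 1 (n - 1), (1 + ζ ^ i) = 1 := by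
  have h := hζ.prod_range_one_add_pow hodd
  rw [prod_range_eq_mul_Ico _ hodd.pos, pow_zero, one_add_one_eq_two,
    ← Icc_sub_one_right_eq_Ico_of_not_isMin (not_isMin_iff_ne_bot.2 hodd.pos.ne')] at h
  exact mul_left_cancel₀ (NeZero.ne 2) (h.trans (mul_one 2).symm)

end IsPrimitiveRoot

theorem s3a_eq_pow_mul_one_add_pow (q : ℂ) (n : ℕ) : s3a q n = q ^ n * (1 + q ^ n) := by
  rw [s3a, mul_comm 2, pow_mul, sq]
  ring

theorem stmt17_general (m : ℕ) (hodd : Odd m) (x : ℂ)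
    (hx : IsPrimitiveRoot x m) :
    ‖∏ i ∈ Finset.Icc 1 (m - 1), s3a x i‖ = 1 := by
  have hnorm : ‖x‖ = 1 := Complex.norm_eq_one_of_pow_eq_one hx.pow_eq_one hodd.pos.ne'
  simp only [s3a_eq_pow_mul_one_add_pow, prod_mul_distrib, hx.prod_Icc_one_add_pow hodd, mul_one,
    norm_prod, norm_pow, hnorm, one_pow, prod_const_one]

theorem stmt17 (m : ℕ) (hpos : 0 < m) (hodd : Odd m) (x : ℂ)
    (hx : IsPrimitiveRoot x m) :
    ‖∏ i ∈ Finset.Icc 1 (m - 1), s3a x i‖ = 1 :=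
  stmt17_general m hodd x hx
end
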